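/- arXiv:1011.4582 — 2 statements merged into one kernel-verified Lean document; each statement's English description precedes it below -/
import Mathlib

section
/- For w ∈ W and A ∈ {Δ, Φ₋}, the set −w_p((w^{-1}A) \ Δ_p) equals (w_p w^{-1} w₀ A) \ Δ_p, where w₀ is the longest element of W and w_p the longest element of the Weyl group of Φ_p. -/
open scoped RealInnerProductSpace

variable {V : Type*} [NormedAddCommGroup V] [InnerProductSpace ℝ V] [FiniteDimensional ℝ V]

/-- The coroot `2v/⟨v,v⟩` of a vector `v`. -/
noncomputable def coroot (v : V) : V := (2 / ⟪v, v⟫) • v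

/-- Reflection in the hyperplane orthogonal to `v`. -/
noncomputable def rootReflection (v : V) : V ≃ₗᵢ[ℝ] V := Submodule.reflection ((ℝ ∙ v)ᗮ)

/-- The Weyl group of a set of roots: the subgroup of linear isometries
generated by the reflections in the roots. -/
noncomputable def weylGroup (Φ : Set V) : Subgroup (V ≃ₗᵢ[ℝ] V) :=
  Subgroup.closure { g | ∃ v ∈ Φ, g = rootReflection v }

/-- Pointwise negation of a set of vectors. -/
def negSet (S : Set V) : Set V := (fun v => -v) '' S

/-- A (crystallographic) root system `Φ` with positive system `Φpos` and
fundamental system `α 1, …, α r`. -/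
structure IsRootSystem (Φ Φpos : Set V) {r : ℕ} (α : Fin r → V) : Prop where
  finite : Φ.Finite
  zero_not_mem : (0 : V) ∉ Φ
  neg_mem : ∀ v ∈ Φ, -v ∈ Φ
  pos_subset : Φpos ⊆ Φ
  pos_or_neg : ∀ v ∈ Φ, v ∈ Φpos ∨ -v ∈ Φpos
  pos_not_neg : ∀ v ∈ Φpos, -v ∉ Φpos
  simple_mem : ∀ i, α i ∈ Φpos
  simple_inj : Function.Injective α
  simple_span : Submodule.span ℝ (Set.range α) = ⊤
  pos_decomp : ∀ v ∈ Φpos, ∃ c : Fin r → ℕ, v = ∑ i, (c i : ℝ) • α i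
  reflect_mem : ∀ u ∈ Φ, ∀ v ∈ Φ, rootReflection u v ∈ Φ
  crystallographic : ∀ u ∈ Φ, ∀ v ∈ Φ, ∃ n : ℤ, ⟪coroot u, v⟫ = (n : ℝ)

/-!
Both `w₀` and `w_p` act on the relevant sets as `-1`: `w₀ A = -A` for `A = Δ` and `A = Φ₋`,
and `w_p Δ_p = -Δ_p`. Since linear maps commute with negation and images under bijections
commute with set difference, the claimed identity is obtained by moving the sign through.
-/

section

variable {E : Type*} [NormedAddCommGroup E]

lemma negSet_negSet (S : Set E) : negSet (negSet S) = S := by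
  simp [negSet]

lemma negSet_diff (S T : Set E) : negSet (S \ T) = negSet S \ negSet T :=
  Set.image_sdiff neg_injective S T

variable [NormedSpace ℝ E]

lemma image_negSet (f : E ≃ₗᵢ[ℝ] E) (S : Set E) : ⇑f '' negSet S = negSet (⇑f '' S) := by
  simp only [negSet, ← Set.image_comp]
  exact Set.image_congr fun x _ => map_neg f x

lemma negSet_image_diff_of_image_eq_negSet {g : E ≃ₗᵢ[ℝ] E} {T : Set E}
    (hT : ⇑g '' T = negSet T) (S : Set E) :
    negSet (⇑g '' (S \ T)) = ⇑g '' negSet S \ T := by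
  rw [Set.image_sdiff g.injective, negSet_diff, hT, negSet_negSet, image_negSet]

lemma image_eq_negSet_of_simple_or_neg_pos {r : ℕ} {Φpos : Set E} {α : Fin r → E}
    {w0 : E ≃ₗᵢ[ℝ] E} (hw0_pos : ⇑w0 '' Φpos = negSet Φpos)
    (hw0_Δ : ⇑w0 '' Set.range α = negSet (Set.range α))
    {A : Set E} (hA : A = Set.range α ∨ A = negSet Φpos) :
    ⇑w0 '' A = negSet A := by
  rcases hA with rfl | rfl
  · exact hw0_Δ
  · rw [image_negSet, hw0_pos]

end

theorem stmt13_general {r : ℕ} (Φpos : Set V) (α : Fin r → V)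
    (Δp : Set V)
    (wp : V ≃ₗᵢ[ℝ] V)
    (hwp_Δp : ⇑wp '' Δp = negSet Δp)
    (w0 : V ≃ₗᵢ[ℝ] V)
    (hw0_pos : ⇑w0 '' Φpos = negSet Φpos)
    (hw0_Δ : ⇑w0 '' Set.range α = negSet (Set.range α))
    (w : V ≃ₗᵢ[ℝ] V)
    (A : Set V) (hA : A = Set.range α ∨ A = negSet Φpos) :
    negSet (⇑wp '' ((⇑w ⁻¹' A) \ Δp)) = (⇑wp '' (⇑w.symm '' (⇑w0 '' A))) \ Δp := by
  have hw_preimage : ⇑w ⁻¹' A = ⇑w.symm '' A := by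
    simpa using (w.symm.image_eq_preimage_symm A).symm
  rw [image_eq_negSet_of_simple_or_neg_pos hw0_pos hw0_Δ hA, image_negSet, hw_preimage,
    negSet_image_diff_of_image_eq_negSet hwp_Δp]

theorem stmt13 {r : ℕ} (Φ Φpos : Set V) (α : Fin r → V)
    (hRS : IsRootSystem Φ Φpos α)
    (lam : Fin r → V)
    (hlam : ∀ i j, ⟪coroot (α i), lam j⟫ = if i = j then 1 else 0)
    (p : Fin r)
    (ρ : V) (hρ : ρ = (2:ℝ)⁻¹ • ∑ᶠ v ∈ Φpos, v)
    (Φp : Set V) (hΦp : Φp = {v ∈ Φ | ⟪lam p, v⟫ = 0})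
    (Φpp : Set V) (hΦpp : Φpp = Φp ∩ Φpos)
    (ρp : V) (hρp : ρp = (2:ℝ)⁻¹ • ∑ᶠ v ∈ Φpp, v)
    (cp : ℝ) (hcp : cp = 2 * ⟪lam p - ρp, coroot (α p)⟫)
    (Δp : Set V) (hΔp : Δp = α '' {i | i ≠ p})
    (wp : V ≃ₗᵢ[ℝ] V) (hwpW : wp ∈ weylGroup Φp)
    (hwp_pos : ⇑wp '' Φpp = negSet Φpp)
    (hwp_Δp : ⇑wp '' Δp = negSet Δp)
    (w0 : V ≃ₗᵢ[ℝ] V) (hw0W : w0 ∈ weylGroup Φ)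
    (hw0_pos : ⇑w0 '' Φpos = negSet Φpos)
    (hw0_Δ : ⇑w0 '' Set.range α = negSet (Set.range α))
    (w : V ≃ₗᵢ[ℝ] V) (hwW : w ∈ weylGroup Φ)
    (A : Set V) (hA : A = Set.range α ∨ A = negSet Φpos) :
    negSet (⇑wp '' ((⇑w ⁻¹' A) \ Δp)) = (⇑wp '' (⇑w.symm '' (⇑w0 '' A))) \ Δp :=
  stmt13_general Φpos α Δp wp hwp_Δp w0 hw0_pos hw0_Δ w A hA
end

section
/- For any w ∈ W, the disjoint union decomposition Φ = w^{-1}Φ₋ ⊔ w_p((w₀ w w_p)^{-1}Φ₋) holds, where w₀ is the longest element of W and w_p the longest element of the Weyl group of Φ_p. -/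
open scoped RealInnerProductSpace

variable {V : Type*} [NormedAddCommGroup V] [InnerProductSpace ℝ V] [FiniteDimensional ℝ V]

/-!
Writing `Φ₊ = w₀⁻¹ Φ₋`, the second set is `w_p (w_p⁻¹ w⁻¹ Φ₊) = w⁻¹ Φ₊`. Since `w` permutes `Φ`
and `Φ = Φ₋ ⊔ Φ₊`, pulling this partition back along `w` gives `Φ = w⁻¹ Φ₋ ⊔ w⁻¹ Φ₊`.
-/

section

omit [FiniteDimensional ℝ V]

omit [InnerProductSpace ℝ V] in
theorem mem_negSet {S : Set V} {v : V} : v ∈ negSet S ↔ -v ∈ S := by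
  simp [negSet]

theorem rootReflection_involutive (u : V) : Function.Involutive (rootReflection u) :=
  Submodule.reflection_reflection _

theorem apply_mem_iff_of_mem_weylGroup {Φ : Set V}
    (hrefl : ∀ u ∈ Φ, ∀ v ∈ Φ, rootReflection u v ∈ Φ)
    {g : V ≃ₗᵢ[ℝ] V} (hg : g ∈ weylGroup Φ) (v : V) : g v ∈ Φ ↔ v ∈ Φ := by
  induction hg using Subgroup.closure_induction generalizing v with
  | mem g hgen =>
    obtain ⟨u, hu, rfl⟩ := hgen
    refine ⟨fun h => ?_, hrefl u hu v⟩
    simpa only [rootReflection_involutive u v] using hrefl u hu _ h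
  | one => rfl
  | mul a b _ _ ha hb => exact (ha (b v)).trans (hb v)
  | inv a _ ha => rw [← ha, LinearIsometryEquiv.coe_inv, LinearIsometryEquiv.apply_symm_apply]

namespace IsRootSystem

variable {Φ Φpos : Set V} {r : ℕ} {α : Fin r → V}

theorem negSet_union_pos (hRS : IsRootSystem Φ Φpos α) : negSet Φpos ∪ Φpos = Φ := by
  ext v
  rw [Set.mem_union, mem_negSet]
  refine ⟨?_, fun hv => (hRS.pos_or_neg v hv).symm⟩
  rintro (h | h)
  · simpa using hRS.neg_mem _ (hRS.pos_subset h)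
  · exact hRS.pos_subset h

theorem disjoint_negSet_pos (hRS : IsRootSystem Φ Φpos α) : Disjoint (negSet Φpos) Φpos :=
  Set.disjoint_left.mpr fun v hneg hpos => hRS.pos_not_neg v hpos (mem_negSet.mp hneg)

end IsRootSystem

end

theorem stmt16_general {r : ℕ} (Φ Φpos : Set V) (α : Fin r → V)
    (hRS : IsRootSystem Φ Φpos α)
    (wp : V ≃ₗᵢ[ℝ] V)
    (w0 : V ≃ₗᵢ[ℝ] V)
    (hw0_pos : ⇑w0 '' Φpos = negSet Φpos)
    (w : V ≃ₗᵢ[ℝ] V) (hwW : w ∈ weylGroup Φ)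
    :
    Φ = (⇑w ⁻¹' (negSet Φpos)) ∪ (⇑wp '' ((⇑w0 ∘ ⇑w ∘ ⇑wp) ⁻¹' (negSet Φpos))) ∧
      Disjoint (⇑w ⁻¹' (negSet Φpos)) (⇑wp '' ((⇑w0 ∘ ⇑w ∘ ⇑wp) ⁻¹' (negSet Φpos))) := by
  have hw0 : ⇑w0 ⁻¹' negSet Φpos = Φpos := by
    rw [← hw0_pos, Set.preimage_image_eq _ w0.injective]
  have hsecond : ⇑wp '' ((⇑w0 ∘ ⇑w ∘ ⇑wp) ⁻¹' negSet Φpos) = ⇑w ⁻¹' Φpos := by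
    rw [Set.preimage_comp, hw0, Set.preimage_comp, Set.image_preimage_eq _ wp.surjective]
  have hw : ⇑w ⁻¹' Φ = Φ :=
    Set.ext (apply_mem_iff_of_mem_weylGroup hRS.reflect_mem hwW)
  rw [hsecond]
  refine ⟨?_, hRS.disjoint_negSet_pos.preimage _⟩
  rw [← Set.preimage_union, hRS.negSet_union_pos, hw]

theorem stmt16 {r : ℕ} (Φ Φpos : Set V) (α : Fin r → V)
    (hRS : IsRootSystem Φ Φpos α)
    (lam : Fin r → V)
    (hlam : ∀ i j, ⟪coroot (α i), lam j⟫ = if i = j then 1 else 0)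
    (p : Fin r)
    (ρ : V) (hρ : ρ = (2:ℝ)⁻¹ • ∑ᶠ v ∈ Φpos, v)
    (Φp : Set V) (hΦp : Φp = {v ∈ Φ | ⟪lam p, v⟫ = 0})
    (Φpp : Set V) (hΦpp : Φpp = Φp ∩ Φpos)
    (ρp : V) (hρp : ρp = (2:ℝ)⁻¹ • ∑ᶠ v ∈ Φpp, v)
    (cp : ℝ) (hcp : cp = 2 * ⟪lam p - ρp, coroot (α p)⟫)
    (wp : V ≃ₗᵢ[ℝ] V) (hwpW : wp ∈ weylGroup Φp)
    (hwp_pos : ⇑wp '' Φpp = negSet Φpp)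
    (w0 : V ≃ₗᵢ[ℝ] V) (hw0W : w0 ∈ weylGroup Φ)
    (hw0_pos : ⇑w0 '' Φpos = negSet Φpos)
    (hw0_Δ : ⇑w0 '' Set.range α = negSet (Set.range α))
    (w : V ≃ₗᵢ[ℝ] V) (hwW : w ∈ weylGroup Φ)
    :
    Φ = (⇑w ⁻¹' (negSet Φpos)) ∪ (⇑wp '' ((⇑w0 ∘ ⇑w ∘ ⇑wp) ⁻¹' (negSet Φpos))) ∧
      Disjoint (⇑w ⁻¹' (negSet Φpos)) (⇑wp '' ((⇑w0 ∘ ⇑w ∘ ⇑wp) ⁻¹' (negSet Φpos))) :=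
  stmt16_general Φ Φpos α hRS wp w0 hw0_pos w hwW
end
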